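/- Let ṽ be a simple game on n players with corresponding monotone (2,2) game v, and let p : {1,2}^n → [0,1] be a probability distribution such that p(a) depends only on the number of coordinates of a equal to 2. Then for each player i, the Shapley-Shubik index φ̃_i(ṽ) = (1/n!)·∑_{S ⊆ N∖{i}} |S|!·(n−1−|S|)!·(ṽ(S∪{i})−ṽ(S)) equals (1/n!)·∑_{(π,a)} p(a)·[(v̄_{π,p-1}(a) − v̲_{π,p-1}(a)) − (v̄_{π,p}(a) − v̲_{π,p}(a))], the expected probability that player i is pivotal in the roll-call model, where p = π^{-1}(i) and the sum is over all permutations π and all a ∈ {1,2}^n. -/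

import Mathlib

open Finset

/-- Votes `{1,2}` encoded as `Fin 2` (`1 ↦ 0`, `2 ↦ 1`). Maximal extension. -/
def vbar {n : ℕ} (v : (Fin n → Fin 2) → Fin 2) (π : Equiv.Perm (Fin n))
    (a : Fin n → Fin 2) (h : ℕ) : Fin 2 :=
  v (fun l => if (π l : ℕ) < h then a l else 1)

/-- Minimal extension. -/
def vbot {n : ℕ} (v : (Fin n → Fin 2) → Fin 2) (π : Equiv.Perm (Fin n))
    (a : Fin n → Fin 2) (h : ℕ) : Fin 2 :=
  v (fun l => if (π l : ℕ) < h then a l else 0)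

/-- Characteristic vector of a coalition `S` ("yes" = `1 : Fin 2`). -/
def charVec {n : ℕ} (S : Finset (Fin n)) : Fin n → Fin 2 :=
  fun l => if l ∈ S then 1 else 0

/-!
For a roll call `(π, charVec T)` the bracket on the right-hand side is the marginal contribution
`D S = v (S ∪ {i}) - v S` of one coalition `S`: if `i` votes yes, `S` is the set of yes-voters
called before `i`; if `i` votes no, `S` is `T` together with everybody called after `i`.
Grouping permutations by the set `E` of players called before `i` (each `E ∌ i` occurs
`|E|! (n-1-|E|)!` times), the coefficient of `D S` becomes a sum over pairs `(E, T)`. Summing out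
the part of `E` that does not influence the pivot coalition produces sums
`∑ C(M,x) (a+x)! (b+M-x)! = C(M+a+b+1, a+b+1) M! a! b!`, after which the coefficient of `D S` is
`|S|! (n-1-|S|)!` times `∑_T p (charVec T) = 1`.
-/

open scoped Nat

theorem sum_antidiagonal_choose_mul_factorial_mul_factorial (M a b : ℕ) :
    ∑ ij ∈ antidiagonal M, M.choose ij.1 * ((a + ij.1)! * (b + ij.2)!) =
      (M + a + b + 1).choose (a + b + 1) * M ! * a ! * b ! := by
  induction M generalizing a b with
  | zero => simp
  | succ M ih =>
    have ha : ∀ ij ∈ antidiagonal M, M.choose ij.2 * ((a + (ij.1 + 1))! * (b + ij.2)!) =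
        M.choose ij.1 * ((a + 1 + ij.1)! * (b + ij.2)!) := by
      intro ij hij
      rw [HasAntidiagonal.mem_antidiagonal] at hij
      rw [← hij, Nat.choose_symm_add, add_right_comm a, add_assoc a]
    have hb : ∀ ij ∈ antidiagonal M, M.choose ij.1 * ((a + ij.1)! * (b + (ij.2 + 1))!) =
        M.choose ij.1 * ((a + ij.1)! * (b + 1 + ij.2)!) := by
      intro ij _
      rw [add_right_comm b, add_assoc b]
    have pascal := sum_antidiagonal_choose_succ_mul (R := ℕ) (fun i j => (a + i)! * (b + j)!) M
    simp only [Nat.cast_id] at pascal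
    rw [pascal, sum_congr rfl hb, sum_congr rfl ha, ih, ih]
    have hchoose := Nat.choose_succ_right_eq (M + 1 + a + b + 1) (a + b + 1)
    rw [show M + 1 + a + b + 1 - (a + b + 1) = M + 1 by omega] at hchoose
    rw [show M + a + (b + 1) + 1 = M + 1 + a + b + 1 by omega,
      show M + (a + 1) + b + 1 = M + 1 + a + b + 1 by omega,
      show a + (b + 1) + 1 = a + b + 1 + 1 by omega, show a + 1 + b + 1 = a + b + 1 + 1 by omega,
      Nat.factorial_succ M, Nat.factorial_succ a, Nat.factorial_succ b]
    linear_combination (M ! * a ! * b !) * hchoose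

section Powerset

variable {α β : Type*} [DecidableEq α] [AddCommMonoid β]

theorem sum_powerset_eq_sum_union_of_subset {T U : Finset α} (hTU : T ⊆ U) (f : Finset α → β) :
    ∑ E ∈ U.powerset, f E = ∑ A ∈ T.powerset, ∑ X ∈ (U \ T).powerset, f (A ∪ X) := by
  rw [← sum_product']
  refine sum_nbij' (fun E => (E ∩ T, E \ T)) (fun p => p.1 ∪ p.2) ?_ ?_ ?_ ?_ ?_
  all_goals simp only [mem_product, mem_powerset, Prod.forall, Prod.ext_iff]
  · exact fun E hE => ⟨inter_subset_right, sdiff_subset_sdiff hE le_rfl⟩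
  · exact fun A X h => union_subset (h.1.trans hTU) (h.2.trans sdiff_subset)
  · exact fun E _ => sup_inf_sdiff E T
  · intro A X h
    grind
  · exact fun E _ => congrArg f (sup_inf_sdiff E T).symm

theorem sum_powerset_eq_sum_sdiff (U : Finset α) (f : Finset α → β) :
    ∑ E ∈ U.powerset, f E = ∑ R ∈ U.powerset, f (U \ R) := by
  refine sum_nbij' (U \ ·) (U \ ·) ?_ ?_ ?_ ?_ ?_ <;> simp +contextual

theorem sum_powerset_sum_powerset_sdiff (U : Finset α) (h : Finset α → Finset α → β) :
    ∑ A ∈ U.powerset, ∑ X ∈ (U \ A).powerset, h A X =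
      ∑ S ∈ U.powerset, ∑ A ∈ S.powerset, h A (S \ A) := by
  rw [sum_sigma', sum_sigma']
  refine sum_nbij' (fun p => ⟨p.1 ∪ p.2, p.1⟩) (fun p => ⟨p.2, p.1 \ p.2⟩) ?_ ?_ ?_ ?_ ?_
  all_goals simp only [mem_sigma, mem_powerset, Sigma.forall, Sigma.ext_iff, heq_eq_eq]
  · exact fun A X h => ⟨union_subset h.1 (h.2.trans sdiff_subset), subset_union_left⟩
  · exact fun S A h => ⟨h.2.trans h.1, sdiff_subset_sdiff h.1 le_rfl⟩
  · exact fun A X h =>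
      ⟨trivial, union_sdiff_cancel_left (disjoint_of_subset_right h.2 disjoint_sdiff)⟩
  · exact fun S A h => ⟨union_sdiff_of_subset h.2, trivial⟩
  · intro A X h
    rw [union_sdiff_cancel_left (disjoint_of_subset_right h.2 disjoint_sdiff)]

theorem sum_powerset_sum_powerset (U : Finset α) (f : Finset α → Finset α → β) :
    ∑ S ∈ U.powerset, ∑ A ∈ S.powerset, f S A =
      ∑ A ∈ U.powerset, ∑ X ∈ (U \ A).powerset, f (A ∪ X) A := by
  rw [sum_powerset_sum_powerset_sdiff]
  exact sum_congr rfl fun S _ => sum_congr rfl fun A hA => by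
    rw [union_sdiff_of_subset (mem_powerset.mp hA)]

theorem sum_powerset_factorial_smul_inter {T U : Finset α} (hTU : T ⊆ U) (G : Finset α → β) :
    ∑ E ∈ U.powerset, ((#E)! * (#U - #E)!) • G (T ∩ E) =
      ∑ A ∈ T.powerset, ((#U + 1).choose (#T + 1) * (#U - #T)! * (#A)! * (#T - #A)!) • G A := by
  rw [sum_powerset_eq_sum_union_of_subset hTU]
  refine sum_congr rfl fun A hA => ?_
  rw [mem_powerset] at hA
  have hAX : ∀ X ∈ (U \ T).powerset, ((#(A ∪ X))! * (#U - #(A ∪ X))!) • G (T ∩ (A ∪ X)) =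
      ((#A + #X)! * (#U - (#A + #X))!) • G A := by
    intro X hX
    have hTX : Disjoint T X := disjoint_of_subset_right (mem_powerset.mp hX) disjoint_sdiff
    rw [card_union_of_disjoint (disjoint_of_subset_left hA hTX), inter_union_distrib_left,
      inter_eq_right.mpr hA, disjoint_iff_inter_eq_empty.mp hTX, union_empty]
  rw [sum_congr rfl hAX, ← sum_smul,
    sum_powerset_apply_card (fun x => (#A + x)! * (#U - (#A + x))!), card_sdiff_of_subset hTU]
  congr 1
  have hT := card_le_card hTU
  have hA' := card_le_card hA
  have hsplit : ∀ m ∈ range (#U - #T + 1), (#U - #T).choose m • ((#A + m)! * (#U - (#A + m))!) =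
      (#U - #T).choose m * ((#A + m)! * (#T - #A + (#U - #T - m))!) := by
    intro m hm
    rw [mem_range] at hm
    rw [smul_eq_mul, show #U - (#A + m) = #T - #A + (#U - #T - m) by omega]
  rw [sum_congr rfl hsplit, ← Nat.sum_antidiagonal_eq_sum_range_succ_mk
      (fun ij => (#U - #T).choose ij.1 * ((#A + ij.1)! * (#T - #A + ij.2)!)),
    sum_antidiagonal_choose_mul_factorial_mul_factorial,
    show #U - #T + #A + (#T - #A) + 1 = #U + 1 by omega, show #A + (#T - #A) + 1 = #T + 1 by omega]

theorem sum_powerset_factorial_smul_union_sdiff {T U : Finset α} (hTU : T ⊆ U)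
    (G : Finset α → β) :
    ∑ E ∈ U.powerset, ((#E)! * (#U - #E)!) • G (T ∪ (U \ E)) =
      ∑ A ∈ (U \ T).powerset,
        ((#U + 1).choose (#U - #T + 1) * (#T)! * (#A)! * (#U - #T - #A)!) • G (T ∪ A) := by
  have hcompl : ∀ R ∈ U.powerset, ((#(U \ R))! * (#U - #(U \ R))!) • G (T ∪ (U \ (U \ R))) =
      ((#R)! * (#U - #R)!) • G (T ∪ ((U \ T) ∩ R)) := by
    intro R hR
    rw [mem_powerset] at hR
    rw [card_sdiff_of_subset hR, Nat.sub_sub_self (card_le_card hR), mul_comm,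
      Finset.sdiff_sdiff_eq_self hR]
    congr 2
    ext x
    have := @hR x
    simp only [mem_union, mem_inter, mem_sdiff]
    tauto
  rw [sum_powerset_eq_sum_sdiff, sum_congr rfl hcompl,
    sum_powerset_factorial_smul_inter sdiff_subset (fun A => G (T ∪ A)),
    card_sdiff_of_subset hTU, Nat.sub_sub_self (card_le_card hTU)]

variable {R : Type*} [CommSemiring R]

theorem sum_powerset_mul_sum_factorial_smul_inter (U : Finset α) (q : ℕ → R)
    (D : Finset α → R) :
    ∑ T ∈ U.powerset, q (#T + 1) * ∑ E ∈ U.powerset, ((#E)! * (#U - #E)!) • D (T ∩ E) =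
      ∑ S ∈ U.powerset, ((#S)! * (#U - #S)! *
        ∑ x ∈ range (#U - #S + 1), ((#U + 1).choose (#S + 1 + x) : R) * q (#S + 1 + x)) * D S := by
  calc _ = ∑ T ∈ U.powerset, ∑ A ∈ T.powerset, q (#T + 1) *
          ((#U + 1).choose (#T + 1) * (#U - #T)! * (#A)! * (#T - #A)! : ℕ) * D A :=
        sum_congr rfl fun T hT => by
          rw [sum_powerset_factorial_smul_inter (mem_powerset.mp hT), mul_sum]
          simp only [nsmul_eq_mul, mul_assoc]
    _ = _ := by
      rw [sum_powerset_sum_powerset]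
      refine sum_congr rfl fun S hS => ?_
      have hSU := card_le_card (mem_powerset.mp hS)
      rw [sum_congr rfl fun X hX => by rw [card_union_of_disjoint
          (disjoint_of_subset_right (mem_powerset.mp hX) disjoint_sdiff)], ← sum_mul,
        sum_powerset_apply_card (fun x => q (#S + x + 1) *
          ((#U + 1).choose (#S + x + 1) * (#U - (#S + x))! * (#S)! * (#S + x - #S)! : ℕ)),
        card_sdiff_of_subset (mem_powerset.mp hS), mul_sum]
      congr 1
      refine sum_congr rfl fun x hx => ?_
      have hx : x ≤ #U - #S := Nat.lt_succ_iff.mp (mem_range.mp hx)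
      have hw : (#U - #S).choose x * ((#U + 1).choose (#S + x + 1) * (#U - (#S + x))! * (#S)! *
          (#S + x - #S)!) = (#S)! * (#U - #S)! * (#U + 1).choose (#S + x + 1) := by
        rw [show #U - (#S + x) = #U - #S - x by omega, show #S + x - #S = x by omega,
          ← Nat.choose_mul_factorial_mul_factorial hx]
        ring
      rw [nsmul_eq_mul, show #S + 1 + x = #S + x + 1 by omega, mul_left_comm, ← Nat.cast_mul, hw]
      push_cast
      ring

theorem sum_powerset_mul_sum_factorial_smul_union_sdiff (U : Finset α) (q : ℕ → R)
    (D : Finset α → R) :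
    ∑ T ∈ U.powerset, q #T * ∑ E ∈ U.powerset, ((#E)! * (#U - #E)!) • D (T ∪ (U \ E)) =
      ∑ S ∈ U.powerset, ((#S)! * (#U - #S)! *
        ∑ t ∈ range (#S + 1), ((#U + 1).choose t : R) * q t) * D S := by
  calc _ = ∑ T ∈ U.powerset, ∑ A ∈ (U \ T).powerset, q #T *
          ((#U + 1).choose (#U - #T + 1) * (#T)! * (#A)! * (#U - #T - #A)! : ℕ) * D (T ∪ A) :=
        sum_congr rfl fun T hT => by
          rw [sum_powerset_factorial_smul_union_sdiff (mem_powerset.mp hT), mul_sum]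
          simp only [nsmul_eq_mul, mul_assoc]
    _ = _ := by
      rw [sum_powerset_sum_powerset_sdiff]
      refine sum_congr rfl fun S hS => ?_
      have hSU := card_le_card (mem_powerset.mp hS)
      rw [sum_congr rfl fun T hT => by rw [card_sdiff_of_subset (mem_powerset.mp hT),
          union_sdiff_of_subset (mem_powerset.mp hT)], ← sum_mul,
        sum_powerset_apply_card (fun t => q t *
          ((#U + 1).choose (#U - t + 1) * t ! * (#S - t)! * (#U - t - (#S - t))! : ℕ)), mul_sum]
      congr 1
      refine sum_congr rfl fun t ht => ?_
      have ht : t ≤ #S := Nat.lt_succ_iff.mp (mem_range.mp ht)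
      have hw : (#S).choose t * ((#U + 1).choose (#U - t + 1) * t ! * (#S - t)! *
          (#U - t - (#S - t))!) = (#S)! * (#U - #S)! * (#U + 1).choose t := by
        rw [show #U - t + 1 = #U + 1 - t by omega, Nat.choose_symm (by omega),
          show #U - t - (#S - t) = #U - #S by omega, ← Nat.choose_mul_factorial_mul_factorial ht]
        ring
      rw [nsmul_eq_mul, mul_left_comm, ← Nat.cast_mul, hw]
      push_cast
      ring

theorem sum_powerset_factorial_smul_sum_pivot {i : α} {U : Finset α} (hi : i ∉ U) (q : ℕ → R)
    (D : Finset α → R) :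
    ∑ E ∈ U.powerset, ((#E)! * (#U - #E)!) •
        ∑ T ∈ (insert i U).powerset, q #T * D (if i ∈ T then T ∩ E else T ∪ (U \ E)) =
      (∑ T ∈ (insert i U).powerset, q #T) * ∑ S ∈ U.powerset, ((#S)! * (#U - #S)!) • D S := by
  have hsplit : ∀ E ∈ U.powerset,
      ∑ T ∈ (insert i U).powerset, q #T * D (if i ∈ T then T ∩ E else T ∪ (U \ E)) =
        ∑ T ∈ U.powerset, (q #T * D (T ∪ (U \ E)) + q (#T + 1) * D (T ∩ E)) := by
    intro E hE
    rw [sum_powerset_insert hi, ← sum_add_distrib]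
    refine sum_congr rfl fun T hT => ?_
    have hiT : i ∉ T := fun h => hi (mem_powerset.mp hT h)
    have hiE : i ∉ E := fun h => hi (mem_powerset.mp hE h)
    rw [if_neg hiT, if_pos (mem_insert_self i T), card_insert_of_notMem hiT,
      insert_inter_of_notMem hiE]
  rw [sum_congr rfl fun E hE => congrArg _ (hsplit E hE)]
  simp only [smul_sum, smul_add, sum_add_distrib]
  rw [sum_comm, sum_comm (f := fun E T => ((#E)! * (#U - #E)!) • (q (#T + 1) * D (T ∩ E)))]
  simp only [← mul_smul_comm, ← mul_sum]
  rw [sum_powerset_mul_sum_factorial_smul_union_sdiff,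
    sum_powerset_mul_sum_factorial_smul_inter, ← sum_add_distrib, mul_sum]
  refine sum_congr rfl fun S hS => ?_
  have hSU := card_le_card (mem_powerset.mp hS)
  rw [sum_powerset_apply_card, card_insert_of_notMem hi,
    show #U + 1 + 1 = (#S + 1) + (#U - #S + 1) by omega, sum_range_add _ (#S + 1)]
  simp only [nsmul_eq_mul]
  push_cast
  ring

end Powerset

theorem card_perm_comp_eq {α ι : Type*} [Fintype α] [DecidableEq α] [Fintype ι] [DecidableEq ι]
    {f g : α → ι} (hfg : ∀ j, Fintype.card {a // f a = j} = Fintype.card {a // g a = j}) :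
    Fintype.card {π : Equiv.Perm α // g ∘ π = f} = ∏ j, (Fintype.card {a // g a = j})! := by
  -- one solution `π₀` identifies all solutions with the stabiliser of `f`
  let π₀ : Equiv.Perm α := Equiv.ofFiberEquiv fun j => Fintype.equivOfCardEq (hfg j)
  have hf : f = g ∘ π₀ := funext fun a => (Equiv.ofFiberEquiv_map _ a).symm
  simp only [← hfg]
  rw [← DomMulAct.stabilizer_card f]
  refine Fintype.card_congr (Equiv.subtypeEquiv (Equiv.mulLeft π₀⁻¹) fun π => ?_)
  rw [hf]
  simp [Function.comp_def, funext_iff]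

def relPosition {α : Type*} [DecidableEq α] (E : Finset α) (i l : α) : Ordering :=
  if l ∈ E then .lt else if l = i then .eq else .gt

theorem relPosition_eq_lt_iff {α : Type*} [DecidableEq α] {E : Finset α} {i l : α} :
    relPosition E i l = .lt ↔ l ∈ E := by
  unfold relPosition
  split_ifs <;> simp_all

section RollCall

variable {n : ℕ}

def calledBefore (π : Equiv.Perm (Fin n)) (h : ℕ) : Finset (Fin n) :=
  univ.filter fun l => (π l : ℕ) < h

theorem self_notMem_calledBefore (π : Equiv.Perm (Fin n)) (i : Fin n) :
    i ∉ calledBefore π (π i) := by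
  simp [calledBefore]

theorem card_calledBefore_self (π : Equiv.Perm (Fin n)) (i : Fin n) :
    #(calledBefore π (π i)) = π i := by
  rw [← Fin.card_Iio]
  exact card_equiv π fun l => by simp [calledBefore]

theorem calledBefore_add_one (π : Equiv.Perm (Fin n)) (i : Fin n) :
    calledBefore π (π i + 1) = insert i (calledBefore π (π i)) := by
  ext l
  simp only [calledBefore, mem_filter, mem_univ, true_and, mem_insert]
  constructor
  · intro h
    rcases Nat.lt_succ_iff_lt_or_eq.mp h with h | h
    · exact Or.inr h
    · exact Or.inl (π.injective (Fin.ext h))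
  · rintro (rfl | h) <;> omega

theorem calledBefore_eq_iff {i : Fin n} {E : Finset (Fin n)} (hiE : i ∉ E) (hE : #E < n)
    (π : Equiv.Perm (Fin n)) :
    calledBefore π (π i) = E ↔ (compare · ⟨#E, hE⟩) ∘ π = relPosition E i := by
  constructor
  · intro h
    have hc : π i = ⟨#E, hE⟩ := Fin.ext (by rw [← card_calledBefore_self, h])
    have hl : ∀ l, l ∈ E ↔ π l < π i := fun l => by simp [← h, calledBefore]
    funext l
    simp only [Function.comp_apply, relPosition, ← hc]
    split_ifs with hlE hli
    · exact compare_lt_iff_lt.mpr ((hl l).mp hlE)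
    · rw [hli, compare_eq_iff_eq]
    · exact compare_gt_iff_gt.mpr (lt_of_le_of_ne (not_lt.mp (hlE ∘ (hl l).mpr))
        fun h => hli (π.injective h.symm))
  · intro h
    have hc : π i = ⟨#E, hE⟩ :=
      compare_eq_iff_eq.mp (by simpa [relPosition, hiE] using congrFun h i)
    ext l
    rw [← relPosition_eq_lt_iff (E := E) (i := i), ← congrFun h l]
    simp [calledBefore, hc, compare_lt_iff_lt, Fin.lt_def]

theorem card_relPosition_fiber {i : Fin n} {E : Finset (Fin n)} (hiE : i ∉ E) (hE : #E < n)
    (j : Ordering) :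
    Fintype.card {l // relPosition E i l = j} =
      Fintype.card {m // compare m (⟨#E, hE⟩ : Fin n) = j} := by
  rw [Fintype.card_subtype, Fintype.card_subtype]
  cases j
  · rw [← filter_mem_eq_inter.trans (univ_inter E)] at *
    simp [relPosition_eq_lt_iff, compare_lt_iff_lt, filter_gt_eq_Iio]
  · rw [card_eq_one.mpr ⟨i, ?_⟩]
    · simp [filter_eq']
    · ext l
      by_cases hl : l ∈ E <;> by_cases hli : l = i <;> simp_all [relPosition]
  · rw [show filter (relPosition E i · = .gt) univ = (insert i E)ᶜ by
      ext l; by_cases hl : l ∈ E <;> by_cases hli : l = i <;> simp_all [relPosition]]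
    rw [card_compl, card_insert_of_notMem hiE]
    simp [compare_gt_iff_gt, filter_lt_eq_Ioi]
    omega

theorem prod_factorial_card_compare_fiber (c : Fin n) :
    ∏ j, (Fintype.card {m // compare m c = j})! = (c : ℕ)! * (n - 1 - c)! := by
  rw [show (univ : Finset Ordering) = {.lt, .eq, .gt} from rfl]
  simp [Fintype.card_subtype, compare_lt_iff_lt, compare_gt_iff_gt, filter_gt_eq_Iio,
    filter_lt_eq_Ioi, filter_eq']

theorem card_filter_calledBefore_eq (i : Fin n) {E : Finset (Fin n)} (hiE : i ∉ E) :
    #{π : Equiv.Perm (Fin n) | calledBefore π (π i) = E} = (#E)! * (n - 1 - #E)! := by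
  have hE : #E < n := by simpa using card_lt_univ_of_notMem hiE
  rw [← Fintype.card_subtype, Fintype.card_congr (Equiv.subtypeEquivRight
      (calledBefore_eq_iff hiE hE)), card_perm_comp_eq (card_relPosition_fiber hiE hE),
    prod_factorial_card_compare_fiber]

theorem sum_perm_calledBefore {M : Type*} [AddCommMonoid M] (i : Fin n)
    (F : Finset (Fin n) → M) :
    ∑ π : Equiv.Perm (Fin n), F (calledBefore π (π i)) =
      ∑ E ∈ (univ.erase i).powerset, ((#E)! * (n - 1 - #E)!) • F E := by
  rw [← sum_fiberwise_of_maps_to (g := fun π => calledBefore π (π i))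
    (t := (univ.erase i).powerset) fun π _ => ?_]
  · refine sum_congr rfl fun E hE => ?_
    have hiE : i ∉ E := fun h => (mem_erase.mp (mem_powerset.mp hE h)).1 rfl
    rw [sum_congr rfl fun π hπ => congrArg F (mem_filter.mp hπ).2, sum_const,
      card_filter_calledBefore_eq i hiE]
  · exact mem_powerset.mpr fun l hl =>
      mem_erase.mpr ⟨fun h => self_notMem_calledBefore π i (h ▸ hl), mem_univ l⟩

theorem vbar_charVec (v : (Fin n → Fin 2) → Fin 2) (π : Equiv.Perm (Fin n))
    (T : Finset (Fin n)) (h : ℕ) :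
    vbar v π (charVec T) h = v (charVec (T ∩ calledBefore π h ∪ (calledBefore π h)ᶜ)) := by
  unfold vbar
  congr 1
  funext l
  simp only [charVec, calledBefore, mem_union, mem_inter, mem_compl, mem_filter, mem_univ,
    true_and]
  split_ifs <;> simp_all

theorem vbot_charVec (v : (Fin n → Fin 2) → Fin 2) (π : Equiv.Perm (Fin n))
    (T : Finset (Fin n)) (h : ℕ) :
    vbot v π (charVec T) h = v (charVec (T ∩ calledBefore π h)) := by
  unfold vbot
  congr 1
  funext l
  simp only [charVec, calledBefore, mem_inter, mem_filter, mem_univ, true_and]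
  split_ifs <;> simp_all

def pivotCoalition (π : Equiv.Perm (Fin n)) (i : Fin n) (T : Finset (Fin n)) : Finset (Fin n) :=
  if i ∈ T then T ∩ calledBefore π (π i) else T ∪ (univ.erase i \ calledBefore π (π i))

theorem vbar_sub_vbot_sub_eq_marginal (v : (Fin n → Fin 2) → Fin 2) (π : Equiv.Perm (Fin n))
    (i : Fin n) (T : Finset (Fin n)) :
    (((vbar v π (charVec T) (π i) : ℕ) : ℝ) - ((vbot v π (charVec T) (π i) : ℕ) : ℝ)) -
      (((vbar v π (charVec T) ((π i : ℕ) + 1) : ℕ) : ℝ) -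
        ((vbot v π (charVec T) ((π i : ℕ) + 1) : ℕ) : ℝ)) =
      ((v (charVec (insert i (pivotCoalition π i T))) : ℕ) : ℝ) -
        ((v (charVec (pivotCoalition π i T)) : ℕ) : ℝ) := by
  have hi := self_notMem_calledBefore π i
  simp only [vbar_charVec, vbot_charVec, calledBefore_add_one, pivotCoalition]
  set P := calledBefore π (π i)
  split_ifs with hiT
  · have h1 : T ∩ insert i P = insert i (T ∩ P) := by ext l; simp; grind
    have h2 : T ∩ P ∪ Pᶜ = insert i (T ∩ P) ∪ (insert i P)ᶜ := by ext l; simp; grind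
    rw [h1, h2]
    ring
  · have h1 : T ∩ insert i P = T ∩ P := by ext l; simp; grind
    have h2 : T ∩ P ∪ Pᶜ = insert i (T ∪ (univ.erase i \ P)) := by ext l; simp; grind
    have h3 : T ∩ P ∪ (insert i P)ᶜ = T ∪ (univ.erase i \ P) := by ext l; simp; grind
    rw [h1, h2, h3]
    ring

theorem filter_charVec_eq_one (T : Finset (Fin n)) : univ.filter (charVec T · = 1) = T := by
  ext l
  by_cases hl : l ∈ T <;> simp [charVec, hl]

theorem charVec_bijective : Function.Bijective (charVec : Finset (Fin n) → Fin n → Fin 2) := by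
  refine (Fintype.bijective_iff_injective_and_card _).mpr ⟨fun S T h => ?_, by simp⟩
  rw [← filter_charVec_eq_one S, ← filter_charVec_eq_one T, h]

theorem exists_eq_comp_card_of_charVec {β : Type*} {p : (Fin n → Fin 2) → β}
    (hanon : ∀ a b : Fin n → Fin 2,
      #(univ.filter (a · = 1)) = #(univ.filter (b · = 1)) → p a = p b) :
    ∃ q : ℕ → β, ∀ T, p (charVec T) = q #T := by
  refine ⟨fun k => p (charVec (univ.filter fun l : Fin n => (l : ℕ) < k)), fun T => hanon _ _ ?_⟩
  rw [filter_charVec_eq_one, filter_charVec_eq_one, Fin.card_filter_val_lt,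
    min_eq_right (card_le_univ T |>.trans_eq (Fintype.card_fin n))]

end RollCall

theorem shapley_shubik_roll_call_general {n : ℕ} (v : (Fin n → Fin 2) → Fin 2)
    (p : (Fin n → Fin 2) → ℝ)
    (hanon : ∀ a b : Fin n → Fin 2,
      (Finset.univ.filter (fun l => a l = 1)).card =
        (Finset.univ.filter (fun l => b l = 1)).card → p a = p b)
    (hsum : ∑ a : Fin n → Fin 2, p a = 1) (i : Fin n) :
    (1 / (n.factorial : ℝ)) *
        ∑ S ∈ (Finset.univ : Finset (Finset (Fin n))).filter (fun S => i ∉ S),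
          (S.card.factorial : ℝ) * ((n - 1 - S.card).factorial : ℝ) *
            (((v (charVec (insert i S)) : ℕ) : ℝ) - ((v (charVec S) : ℕ) : ℝ)) =
      (1 / (n.factorial : ℝ)) *
        ∑ π : Equiv.Perm (Fin n), ∑ a : Fin n → Fin 2,
          p a *
            ((((vbar v π a (π i) : ℕ) : ℝ) - ((vbot v π a (π i) : ℕ) : ℝ)) -
              (((vbar v π a ((π i : ℕ) + 1) : ℕ) : ℝ) -
                ((vbot v π a ((π i : ℕ) + 1) : ℕ) : ℝ))) := by
  obtain ⟨q, hq⟩ := exists_eq_comp_card_of_charVec hanon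
  set D : Finset (Fin n) → ℝ := fun S =>
    ((v (charVec (insert i S)) : ℕ) : ℝ) - ((v (charVec S) : ℕ) : ℝ)
  have hU : #(univ.erase i) = n - 1 := by simp [card_erase_of_mem]
  have hq_one : ∑ T ∈ (insert i (univ.erase i)).powerset, q #T = 1 := by
    rw [insert_erase (mem_univ i), powerset_univ, ← hsum]
    exact Fintype.sum_bijective _ charVec_bijective _ _ fun T => (hq T).symm
  have hfilter : univ.filter (fun S => i ∉ S) = (univ.erase i).powerset := by
    ext S
    simp [subset_erase]
  congr 1
  calc ∑ S ∈ univ.filter (fun S => i ∉ S), ((#S)! : ℝ) * ((n - 1 - #S)! : ℝ) * D S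
      = (∑ T ∈ (insert i (univ.erase i)).powerset, q #T) *
          ∑ S ∈ (univ.erase i).powerset, ((#S)! * (#(univ.erase i) - #S)!) • D S := by
        rw [hq_one, one_mul, hfilter, hU]
        simp only [nsmul_eq_mul, Nat.cast_mul]
    _ = ∑ π : Equiv.Perm (Fin n), ∑ T, q #T * D (pivotCoalition π i T) := by
        rw [← sum_powerset_factorial_smul_sum_pivot (notMem_erase i univ), hU,
          insert_erase (mem_univ i), powerset_univ, ← sum_perm_calledBefore i fun E =>
            ∑ T, q #T * D (if i ∈ T then T ∩ E else T ∪ (univ.erase i \ E))]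
        rfl
    _ = _ := sum_congr rfl fun π _ => Fintype.sum_bijective charVec charVec_bijective _ _
        fun T => by rw [hq, vbar_sub_vbot_sub_eq_marginal]

/-- Theorem 4.1 (main theorem): for a monotone surjective `(2,2)` game (a simple game)
and any probability distribution `p` on the vote vectors that only depends on the number
of "yes"-votes, the Shapley-Shubik index of player `i` equals the expected probability
of `i` being pivotal in the roll-call model. -/
theorem shapley_shubik_roll_call {n : ℕ} (v : (Fin n → Fin 2) → Fin 2)
    (hmono : Monotone v) (hsurj : Function.Surjective v)
    (p : (Fin n → Fin 2) → ℝ)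
    (hanon : ∀ a b : Fin n → Fin 2,
      (Finset.univ.filter (fun l => a l = 1)).card =
        (Finset.univ.filter (fun l => b l = 1)).card → p a = p b)
    (hpos : ∀ a, 0 ≤ p a) (hsum : ∑ a : Fin n → Fin 2, p a = 1) (i : Fin n) :
    (1 / (n.factorial : ℝ)) *
        ∑ S ∈ (Finset.univ : Finset (Finset (Fin n))).filter (fun S => i ∉ S),
          (S.card.factorial : ℝ) * ((n - 1 - S.card).factorial : ℝ) *
            (((v (charVec (insert i S)) : ℕ) : ℝ) - ((v (charVec S) : ℕ) : ℝ)) =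
      (1 / (n.factorial : ℝ)) *
        ∑ π : Equiv.Perm (Fin n), ∑ a : Fin n → Fin 2,
          p a *
            ((((vbar v π a (π i) : ℕ) : ℝ) - ((vbot v π a (π i) : ℕ) : ℝ)) -
              (((vbar v π a ((π i : ℕ) + 1) : ℕ) : ℝ) -
                ((vbot v π a ((π i : ℕ) + 1) : ℕ) : ℝ))) :=
  shapley_shubik_roll_call_general v p hanon hsum i
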